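/- arXiv:1201.0887 — 5 statements merged into one kernel-verified Lean document; each statement's English description precedes it below -/
import Mathlib

section
/- Let G be an ordered graph on vertex set {1,...,n} and let a,b ≥ 0 be integers. If the chromatic number of G is greater than 2^(a+b+1), then there exists an induced subgraph H of G such that χ(H) > 2^a and for every edge uv of H with u < v, the subgraph of G induced by the vertices strictly between u and v has chromatic number at least 2^b. -/
/-!
Cut `1, …, n` greedily into consecutive intervals `B₀, B₁, …`, each a maximal `2^b`-colourable
interval, so that `Bᵢ` together with the first vertex after it is not `2^b`-colourable. Colour each
vertex by the parity of the index of its interval and by a `2^b`-colouring of that interval. These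
`2 · 2^b` classes cover `G` and `χ(G) > 2 · 2^b · 2^a`, so some class `H` has `χ(H) > 2^a`. An edge
`u < v` of `H` cannot lie inside one interval, so it joins `Bᵢ` to `Bₖ` with `k ≥ i + 2`; then
`(u, v]` contains `B_{i+1}` and the vertex after it, hence `χ(G(u, v)) ≥ 2^b`.
-/

namespace SimpleGraph

variable {V : Type*}

theorem Colorable.induce_insert {G : SimpleGraph V} {s : Set V} {k : ℕ}
    (h : (G.induce s).Colorable k) (x : V) :
    (G.induce (insert x s)).Colorable (k + 1) := by
  classical
  obtain ⟨c⟩ := h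
  let c' : ↥(insert x s) → Option (Fin k) := fun v ↦
    if hv : ↑v = x then none else some (c ⟨v, v.2.resolve_left hv⟩)
  have hc' : ∀ {v w}, (G.induce (insert x s)).Adj v w → c' v ≠ c' w := by
    rintro ⟨v, hv⟩ ⟨w, hw⟩ hvw
    simp only [c']
    split_ifs with hvx hwx hwx
    · exact absurd (hvx.trans hwx.symm) (G.ne_of_adj hvw)
    · simp
    · simp
    · exact fun h ↦ c.valid (by simpa using hvw) (Option.some.inj h)
  simpa using (Coloring.mk c' hc').colorable

variable (G : SimpleGraph V)

theorem antitone_colorable_induce (k : ℕ) : Antitone fun s : Set V ↦ (G.induce s).Colorable k :=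
  fun _ _ hst h ↦ h.of_hom (G.induceHomOfLE hst).toHom

theorem colorable_induce_of_subsingleton {s : Set V} (hs : s.Subsingleton) {k : ℕ} (hk : k ≠ 0) :
    (G.induce s).Colorable k :=
  ⟨Coloring.mk (fun _ ↦ ⟨0, Nat.pos_of_ne_zero hk⟩)
    fun {v w} hvw ↦ absurd (Subtype.ext (hs v.2 w.2)) hvw.ne⟩

theorem exists_fiberwise_coloring {ι : Type*} {β : V → ι} {k : ℕ}
    (h : ∀ i, (G.induce (β ⁻¹' {i})).Colorable k) :
    ∃ c : V → Fin k, ∀ ⦃v w⦄, G.Adj v w → β v = β w → c v ≠ c w := by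
  let C : ∀ i, (G.induce (β ⁻¹' {i})).Coloring (Fin k) := fun i ↦ (h i).some
  let c : V → Fin k := fun v ↦ C (β v) ⟨v, rfl⟩
  have hc : ∀ v i (hv : β v = i), c v = C i ⟨v, hv⟩ := by rintro v _ rfl; rfl
  refine ⟨c, fun v w hvw hβ ↦ ?_⟩
  rw [hc v (β v) rfl, hc w (β v) hβ.symm]
  exact (C _).valid hvw

theorem colorable_of_forall_fiber {ι : Type*} [Fintype ι] (φ : V → ι) {k : ℕ}
    (h : ∀ i, (G.induce (φ ⁻¹' {i})).Colorable k) : G.Colorable (Fintype.card ι * k) := by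
  obtain ⟨c, hc⟩ := G.exists_fiberwise_coloring h
  have hvalid : ∀ {v w}, G.Adj v w → (φ v, c v) ≠ (φ w, c w) := fun hvw heq ↦
    hc hvw (Prod.ext_iff.mp heq).1 (Prod.ext_iff.mp heq).2
  simpa using (Coloring.mk _ hvalid).colorable

end SimpleGraph

namespace GreedyPartition

open Classical

variable {n : ℕ} (P : Set (Fin n) → Prop)

noncomputable def next (i : ℕ) : ℕ :=
  Nat.findGreatest (fun m ↦ P (Fin.val ⁻¹' Set.Ico i m)) n

noncomputable def boundary (j : ℕ) : ℕ := (next P)^[j] 0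

noncomputable def index (v : Fin n) : ℕ := Nat.findGreatest (fun j ↦ boundary P j ≤ v) n

variable {P}

theorem subsingleton_preimage_val_Ico {i m : ℕ} (h : m ≤ i + 1) :
    (Fin.val ⁻¹' Set.Ico i m : Set (Fin n)).Subsingleton :=
  ((Set.subsingleton_singleton (a := i)).anti fun x hx ↦ by
    simp only [Set.mem_Ico] at hx; simp only [Set.mem_singleton_iff]; omega).preimage
    Fin.val_injective

variable (hsub : ∀ s : Set (Fin n), s.Subsingleton → P s)
include hsub

theorem le_next {i : ℕ} (hi : i ≤ n) : i ≤ next P i :=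
  Nat.le_findGreatest hi (hsub _ (subsingleton_preimage_val_Ico (by omega)))

theorem lt_next {i : ℕ} (hi : i < n) : i < next P i :=
  Nat.le_findGreatest hi (hsub _ (subsingleton_preimage_val_Ico le_rfl))

theorem next_spec {i : ℕ} (hi : i ≤ n) : P (Fin.val ⁻¹' Set.Ico i (next P i)) :=
  Nat.findGreatest_spec (P := fun m ↦ P (Fin.val ⁻¹' Set.Ico i m)) hi
    (hsub _ (subsingleton_preimage_val_Ico (by omega)))

omit hsub in
theorem not_next_succ {i : ℕ} (h : next P i < n) : ¬ P (Fin.val ⁻¹' Set.Ico i (next P i + 1)) :=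
  Nat.findGreatest_is_greatest (Nat.lt_succ_self _) h

omit hsub in
theorem boundary_succ (j : ℕ) : boundary P (j + 1) = next P (boundary P j) :=
  Function.iterate_succ_apply' _ _ _

omit hsub in
theorem boundary_le (j : ℕ) : boundary P j ≤ n := by
  cases j with
  | zero => exact Nat.zero_le n
  | succ j => rw [boundary_succ]; exact Nat.findGreatest_le n

theorem boundary_mono : Monotone (boundary P) :=
  monotone_nat_of_le_succ fun j ↦ (boundary_succ j).symm ▸ le_next hsub (boundary_le j)

theorem min_le_boundary (j : ℕ) : min j n ≤ boundary P j := by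
  induction j with
  | zero => exact Nat.zero_le _
  | succ j ih =>
    rw [boundary_succ]
    rcases lt_or_ge (boundary P j) n with h | h
    · have := lt_next hsub h; omega
    · have := le_next hsub (boundary_le (P := P) j); omega

omit hsub in
theorem index_mono : Monotone (index P) :=
  fun _ _ huv ↦ Nat.findGreatest_mono_left (fun _ hj ↦ hj.trans huv) n

omit hsub in
theorem boundary_index_le (v : Fin n) : boundary P (index P v) ≤ v :=
  Nat.findGreatest_spec (P := fun j ↦ boundary P j ≤ v) (Nat.zero_le n) (Nat.zero_le _)

theorem lt_boundary_index_succ (v : Fin n) : ↑v < boundary P (index P v + 1) := by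
  by_contra! h
  have hlt : index P v < n := by
    refine lt_of_le_of_ne (Nat.findGreatest_le n) fun heq ↦ ?_
    have := min_le_boundary hsub n
    have := boundary_index_le (P := P) v
    rw [heq] at this
    omega
  exact (Nat.le_findGreatest hlt h).not_gt (Nat.lt_succ_self _)

theorem index_preimage_singleton (hP : Antitone P) (j : ℕ) : P (index P ⁻¹' {j}) := by
  refine hP (fun v (hv : index P v = j) ↦ ?_)
    (boundary_succ (P := P) j ▸ next_spec hsub (boundary_le j))
  subst hv
  exact ⟨boundary_index_le v, lt_boundary_index_succ hsub v⟩

theorem not_Ioc_of_add_two_le_index (hP : Antitone P) {u v : Fin n}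
    (h : index P u + 2 ≤ index P v) :
    ¬ P (Set.Ioc u v) := by
  set j := index P u + 1
  have hu : ↑u < boundary P j := lt_boundary_index_succ hsub u
  have hv : boundary P (j + 1) ≤ v := (boundary_mono hsub h).trans (boundary_index_le v)
  rw [boundary_succ] at hv
  refine fun hPuv ↦ not_next_succ (i := boundary P j) (by omega) (hP (fun w hw ↦ ?_) hPuv)
  simp only [Set.mem_preimage, Set.mem_Ico] at hw
  exact ⟨Fin.lt_def.mpr (by omega), Fin.le_def.mpr (by omega)⟩

end GreedyPartition

theorem exists_greedy_interval_partition {n : ℕ} (P : Set (Fin n) → Prop) (hP : Antitone P)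
    (hsub : ∀ s : Set (Fin n), s.Subsingleton → P s) :
    ∃ β : Fin n → ℕ, Monotone β ∧ (∀ j, P (β ⁻¹' {j})) ∧
      ∀ u v, β u + 2 ≤ β v → ¬ P (Set.Ioc u v) :=
  ⟨GreedyPartition.index P, GreedyPartition.index_mono,
    GreedyPartition.index_preimage_singleton hsub hP,
    fun _ _ ↦ GreedyPartition.not_Ioc_of_add_two_le_index hsub hP⟩

/-- Lemma (sequence): if an ordered graph `G` on `Fin n` has chromatic number greater
than `2 ^ (a + b + 1)`, then there is a set of vertices `H` whose induced subgraph has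
chromatic number greater than `2 ^ a`, and for every edge `u v` of that induced subgraph
with `u < v`, the subgraph induced by the vertices strictly between `u` and `v` has
chromatic number at least `2 ^ b`. -/
theorem stmt0 (n a b : ℕ) (G : SimpleGraph (Fin n))
    (hχ : (2 ^ (a + b + 1) : ℕ∞) < G.chromaticNumber) :
    ∃ H : Set (Fin n),
      (2 ^ a : ℕ∞) < (G.induce H).chromaticNumber ∧
      ∀ u v : Fin n, u ∈ H → v ∈ H → G.Adj u v → u < v →
        (2 ^ b : ℕ∞) ≤ (G.induce {w : Fin n | u < w ∧ w < v}).chromaticNumber := by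
  obtain ⟨β, hβ_mono, hβ_fiber, hβ_sat⟩ :=
    exists_greedy_interval_partition _ (G.antitone_colorable_induce (2 ^ b))
      fun _ hs ↦ G.colorable_induce_of_subsingleton hs (by positivity)
  obtain ⟨c, hc⟩ := G.exists_fiberwise_coloring hβ_fiber
  let φ : Fin n → ZMod 2 × Fin (2 ^ b) := fun v ↦ (β v, c v)
  obtain ⟨i, hi⟩ : ∃ i, ¬ (G.induce (φ ⁻¹' {i})).Colorable (2 ^ a) := by
    by_contra! h
    have hG := (G.colorable_of_forall_fiber φ h).chromaticNumber_le
    simp only [Fintype.card_prod, ZMod.card, Fintype.card_fin] at hG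
    exact hχ.not_ge (hG.trans_eq (by push_cast; ring))
  refine ⟨φ ⁻¹' {i}, lt_of_not_ge fun h ↦ hi (SimpleGraph.chromaticNumber_le_iff_colorable.mp
    (by exact_mod_cast h)), fun u v hu hv huv hlt ↦ ?_⟩
  have hφ : φ u = φ v := hu.trans hv.symm
  have hpar : β u % 2 = β v % 2 := (ZMod.natCast_eq_natCast_iff' _ _ _).mp (Prod.ext_iff.mp hφ).1
  have hne : β u ≠ β v := fun h ↦ hc huv h (Prod.ext_iff.mp hφ).2
  have hgap : β u + 2 ≤ β v := by have := hβ_mono hlt.le; omega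
  have hIoc := hβ_sat u v hgap
  rw [← Set.Ioo_insert_right hlt] at hIoc
  refine SimpleGraph.le_chromaticNumber_iff_colorable.mpr fun m hm ↦ ?_
  have : ¬ m + 1 ≤ 2 ^ b := fun h ↦ hIoc ((hm.induce_insert v).mono h)
  exact_mod_cast (by omega : 2 ^ b ≤ m)
end

section
/- Let C_1, ..., C_n be x-monotone right-flag curves in the plane (each with left endpoint on the y-axis, contained in the closed right half-plane, ordered bottom-to-top along the y-axis). Suppose curves C_{i_1}, ..., C_{i_m} with i_1 < ... < i_m pairwise intersect, and C_j is disjoint from all of them with i_1 < j < i_m. Then the x-coordinate of the right endpoint of C_j is at most the minimum over t of the x-coordinate of the right endpoint of C_{i_t}. -/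
lemma aux_pos_stmt4 {g : ℝ → ℝ} {c : ℝ} (hg : ContinuousOn g (Set.Icc 0 c))
    (h0 : 0 < g 0) (hne : ∀ u ∈ Set.Icc 0 c, g u ≠ 0) :
    ∀ u ∈ Set.Icc 0 c, 0 < g u := by
  intro u hu
  by_contra hle
  push_neg at hle
  have hsub : Set.Icc (0:ℝ) u ⊆ Set.Icc 0 c := Set.Icc_subset_Icc le_rfl hu.2
  have h0mem : (0:ℝ) ∈ Set.Icc (g u) (g 0) := ⟨hle, h0.le⟩
  obtain ⟨v, hv, hv0⟩ := intermediate_value_Icc' hu.1 (hg.mono hsub) h0mem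
  exact hne v (hsub hv) hv0

/-- Lemma (short): model `x`-monotone right-flag curves as graphs of continuous
functions `f i : [0, x i] → ℝ`, ordered bottom-to-top by their values on the
`y`-axis.  If the curves `C (idx 0), …, C (idx (m-1))` (with strictly increasing
indices) pairwise intersect, and `C j` is disjoint from all of them with
`idx 0 < j < idx (m-1)`, then the right endpoint of `C j` does not extend beyond
any right endpoint of the pairwise-intersecting family:
`x j ≤ min_t x (idx t)`. -/
theorem stmt4 (n m : ℕ) (hm : 1 ≤ m) (x : Fin n → ℝ) (f : Fin n → ℝ → ℝ)
    (hx : ∀ i, 0 ≤ x i)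
    (hcont : ∀ i, ContinuousOn (f i) (Set.Icc 0 (x i)))
    (horder : ∀ i j : Fin n, i < j → f i 0 < f j 0)
    (idx : Fin m → Fin n) (hidx : StrictMono idx)
    (hcross : ∀ s t : Fin m, s ≠ t →
      ∃ u, 0 ≤ u ∧ u ≤ min (x (idx s)) (x (idx t)) ∧ f (idx s) u = f (idx t) u)
    (j : Fin n) (hj1 : idx ⟨0, hm⟩ < j) (hj2 : j < idx ⟨m - 1, Nat.sub_lt hm Nat.one_pos⟩)
    (hdisj : ∀ t : Fin m, ∀ u, 0 ≤ u → u ≤ min (x j) (x (idx t)) → f j u ≠ f (idx t) u) :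
    ∀ t : Fin m, x j ≤ x (idx t) := by
  -- For a curve below j, f j stays strictly above it on the common domain.
  have key_lt : ∀ s : Fin m, idx s < j → ∀ u, 0 ≤ u → u ≤ x (idx s) → u ≤ x j →
      f (idx s) u < f j u := by
    intro s hs u hu hus huj
    have hsub1 : Set.Icc (0:ℝ) (min (x j) (x (idx s))) ⊆ Set.Icc 0 (x j) :=
      Set.Icc_subset_Icc le_rfl (min_le_left _ _)
    have hsub2 : Set.Icc (0:ℝ) (min (x j) (x (idx s))) ⊆ Set.Icc 0 (x (idx s)) :=
      Set.Icc_subset_Icc le_rfl (min_le_right _ _)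
    have hg : ContinuousOn (fun v => f j v - f (idx s) v)
        (Set.Icc 0 (min (x j) (x (idx s)))) :=
      ((hcont j).mono hsub1).sub ((hcont (idx s)).mono hsub2)
    have h0 : 0 < f j 0 - f (idx s) 0 := sub_pos.mpr (horder _ _ hs)
    have hne : ∀ u ∈ Set.Icc (0:ℝ) (min (x j) (x (idx s))),
        f j u - f (idx s) u ≠ 0 := fun u hu =>
      sub_ne_zero_of_ne (hdisj s u hu.1 hu.2)
    have := aux_pos_stmt4 hg h0 hne u ⟨hu, le_min huj hus⟩
    linarith
  -- For a curve above j, f j stays strictly below it on the common domain.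
  have key_gt : ∀ s : Fin m, j < idx s → ∀ u, 0 ≤ u → u ≤ x (idx s) → u ≤ x j →
      f j u < f (idx s) u := by
    intro s hs u hu hus huj
    have hsub1 : Set.Icc (0:ℝ) (min (x j) (x (idx s))) ⊆ Set.Icc 0 (x j) :=
      Set.Icc_subset_Icc le_rfl (min_le_left _ _)
    have hsub2 : Set.Icc (0:ℝ) (min (x j) (x (idx s))) ⊆ Set.Icc 0 (x (idx s)) :=
      Set.Icc_subset_Icc le_rfl (min_le_right _ _)
    have hg : ContinuousOn (fun v => f (idx s) v - f j v)
        (Set.Icc 0 (min (x j) (x (idx s)))) :=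
      ((hcont (idx s)).mono hsub2).sub ((hcont j).mono hsub1)
    have h0 : 0 < f (idx s) 0 - f j 0 := sub_pos.mpr (horder _ _ hs)
    have hne' : ∀ u ∈ Set.Icc (0:ℝ) (min (x j) (x (idx s))),
        f (idx s) u - f j u ≠ 0 := by
      intro u hu h
      exact hdisj s u hu.1 hu.2 (by linarith [sub_eq_zero.mp h])
    have := aux_pos_stmt4 hg h0 hne' u ⟨hu, le_min huj hus⟩
    linarith
  intro t
  by_contra hlt
  push_neg at hlt
  rcases lt_trichotomy (idx t) j with hc | hc | hc
  · -- idx t below j: use top curve b = idx (m-1), which is above j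
    set b : Fin m := ⟨m - 1, Nat.sub_lt hm Nat.one_pos⟩ with hb
    have htb : t ≠ b := by
      intro h; rw [h] at hc; exact absurd hj2 (not_lt.mpr hc.le)
    obtain ⟨u, hu0, humin, heq⟩ := hcross t b htb
    have hut : u ≤ x (idx t) := le_trans humin (min_le_left _ _)
    have hub : u ≤ x (idx b) := le_trans humin (min_le_right _ _)
    have huj : u ≤ x j := le_trans hut hlt.le
    have h1 := key_lt t hc u hu0 hut huj
    have h2 := key_gt b hj2 u hu0 hub huj
    linarith [heq ▸ h1]
  · -- idx t = j: impossible, they'd coincide at 0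
    exact hdisj t 0 le_rfl (le_min (hx j) (hx (idx t))) (by rw [hc])
  · -- idx t above j: use bottom curve a = idx 0, which is below j
    set a : Fin m := ⟨0, hm⟩ with ha
    have hta : a ≠ t := by
      intro h; rw [h] at hj1; exact absurd hj1 (not_lt.mpr hc.le)
    obtain ⟨u, hu0, humin, heq⟩ := hcross a t hta
    have hua : u ≤ x (idx a) := le_trans humin (min_le_left _ _)
    have hut : u ≤ x (idx t) := le_trans humin (min_le_right _ _)
    have huj : u ≤ x j := le_trans hut hlt.le
    have h1 := key_lt a hj1 u hu0 hua huj
    have h2 := key_gt t hc u hu0 hut huj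
    linarith [heq ▸ h1]
end

section
/- The intersection graph of a family of arcs A_i, where A_i is the initial portion of curve C_i from its left endpoint on the y-axis up to its intersection point with a fixed curve C_a, is an incomparability graph; in particular it is perfect, and hence if it has no clique of size k+1 it can be properly colored with k colors, i.e., partitioned into k families of pairwise disjoint arcs. -/
section DilworthAux

variable {α : Type*} [DecidableEq α]

/-- A nonempty finite set has an element maximal with respect to a transitive
antisymmetric relation. -/
lemma rel_exists_maximal (r : α → α → Prop)
    (htrans : ∀ {x y z}, r x y → r y z → r x z)
    (hanti : ∀ {x y}, r x y → r y x → x = y) :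
    ∀ s : Finset α, s.Nonempty → ∃ m ∈ s, ∀ x ∈ s, r m x → x = m := by
  intro s
  induction s using Finset.induction_on with
  | empty => intro hs; exact absurd hs (by simp)
  | @insert a t hat ih =>
    intro _
    rcases t.eq_empty_or_nonempty with rfl | htne
    · exact ⟨a, by simp, by intro x hx _; simpa using hx⟩
    · obtain ⟨m, hmt, hmax⟩ := ih htne
      by_cases hma : r m a
      · refine ⟨a, Finset.mem_insert_self _ _, ?_⟩
        intro x hx hax
        rcases Finset.mem_insert.1 hx with rfl | hxt
        · rfl
        · have hmx : r m x := htrans hma hax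
          have hxm : x = m := hmax x hxt hmx
          subst hxm
          exact hanti hma hax
      · refine ⟨m, Finset.mem_insert_of_mem hmt, ?_⟩
        intro x hx hmx
        rcases Finset.mem_insert.1 hx with rfl | hxt
        · exact absurd hmx hma
        · exact hmax x hxt hmx

/-- A nonempty finite chain has a greatest element. -/
lemma chain_exists_max (r : α → α → Prop) (hrefl : ∀ x, r x x)
    (htrans : ∀ {x y z}, r x y → r y z → r x z) :
    ∀ t : Finset α, t.Nonempty → (∀ x ∈ t, ∀ y ∈ t, r x y ∨ r y x) →
      ∃ m ∈ t, ∀ x ∈ t, r x m := by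
  intro t
  induction t using Finset.induction_on with
  | empty => intro hs; exact absurd hs (by simp)
  | @insert a u hau ih =>
    intro _ hch
    rcases u.eq_empty_or_nonempty with rfl | hune
    · exact ⟨a, by simp, by intro x hx; simp at hx; subst hx; exact hrefl _⟩
    · obtain ⟨m, hmu, hmax⟩ := ih hune
        (fun x hx y hy => hch x (Finset.mem_insert_of_mem hx) y (Finset.mem_insert_of_mem hy))
      rcases hch a (Finset.mem_insert_self _ _) m (Finset.mem_insert_of_mem hmu) with ham | hma
      · refine ⟨m, Finset.mem_insert_of_mem hmu, ?_⟩
        intro x hx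
        rcases Finset.mem_insert.1 hx with rfl | hxu
        · exact ham
        · exact hmax x hxu
      · refine ⟨a, Finset.mem_insert_self _ _, ?_⟩
        intro x hx
        rcases Finset.mem_insert.1 hx with rfl | hxu
        · exact hrefl _
        · exact htrans (hmax x hxu) hma

/-- **Dilworth's theorem**, in chain-cover form: if every antichain of `s` (with respect
to a partial-order relation `r`) has at most `k` elements, then `s` can be covered by at
most `k` pairwise disjoint chains. -/
lemma dilworth_cover (r : α → α → Prop) (hrefl : ∀ x, r x x)
    (htrans : ∀ {x y z}, r x y → r y z → r x z)
    (hanti : ∀ {x y}, r x y → r y x → x = y) :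
    ∀ (N : ℕ) (s : Finset α), s.card ≤ N → ∀ (k : ℕ),
    (∀ t ⊆ s, (∀ x ∈ t, ∀ y ∈ t, x ≠ y → ¬ r x y) → t.card ≤ k) →
    ∃ C : ℕ → Finset α,
      (∀ i, C i ⊆ s) ∧
      (∀ i, ∀ x ∈ C i, ∀ y ∈ C i, r x y ∨ r y x) ∧
      (∀ i j, i ≠ j → Disjoint (C i) (C j)) ∧
      (∀ x ∈ s, ∃ i < k, x ∈ C i) := by
  intro N
  induction N with
  | zero =>
    intro s hs k _
    have : s = ∅ := Finset.card_eq_zero.1 (Nat.le_zero.1 hs)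
    subst this
    exact ⟨fun _ => ∅, by simp, by simp, by simp, by simp⟩
  | succ N IH =>
    intro s hsN k hw
    classical
    rcases s.eq_empty_or_nonempty with rfl | hsne
    · exact ⟨fun _ => ∅, by simp, by simp, by simp, by simp⟩
    obtain ⟨a, has, hamax⟩ := rel_exists_maximal r @htrans @hanti s hsne
    have hk1 : 1 ≤ k := by
      have := hw {a} (by simpa using has) (by simp)
      simpa using this
    set s' := s.erase a with hs'def
    have hs'sub : s' ⊆ s := Finset.erase_subset _ _
    have hs'card : s'.card ≤ N := by
      have h1 : s'.card = s.card - 1 := Finset.card_erase_of_mem has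
      have h2 : 1 ≤ s.card := Finset.card_pos.2 hsne
      omega
    have hans' : a ∉ s' := Finset.notMem_erase _ _
    by_cases hB : ∃ t ⊆ s', (∀ x ∈ t, ∀ y ∈ t, x ≠ y → ¬ r x y) ∧ t.card = k
    · -- Case B : there is an antichain of size `k` in `s'`
      have hw'' : ∀ t ⊆ s', (∀ x ∈ t, ∀ y ∈ t, x ≠ y → ¬ r x y) → t.card ≤ k :=
        fun t ht hac => hw t (ht.trans hs'sub) hac
      obtain ⟨C, hCs, hCch, hCd, hCcov⟩ := IH s' hs'card k hw''
      -- every `k`-antichain of `s'` meets every chain `C i`, `i < k`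
      have claim1 : ∀ t, t ⊆ s' → (∀ x ∈ t, ∀ y ∈ t, x ≠ y → ¬ r x y) → t.card = k →
          ∀ i < k, ∃ x ∈ t, x ∈ C i := by
        intro t ht hac htc i hik
        have hcov' : ∀ x : {y // y ∈ t}, ∃ j : Fin k, (x : α) ∈ C j := by
          rintro ⟨x, hx⟩
          obtain ⟨j, hj, hxj⟩ := hCcov x (ht hx)
          exact ⟨⟨j, hj⟩, hxj⟩
        choose ι hι using hcov'
        have hinj : Function.Injective ι := by
          intro x y hxy
          have h1 := hι x
          have h2 := hι y
          rw [hxy] at h1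
          have hcomp := hCch (ι y) x h1 y h2
          by_contra hne
          have hne' : (x : α) ≠ (y : α) := fun hh => hne (Subtype.ext hh)
          rcases hcomp with hxy' | hyx'
          · exact hac _ x.2 _ y.2 hne' hxy'
          · exact hac _ y.2 _ x.2 hne'.symm hyx'
        have hbij : Function.Bijective ι := by
          rw [Fintype.bijective_iff_injective_and_card]
          refine ⟨hinj, ?_⟩
          simp [Fintype.card_coe, htc]
        obtain ⟨x, hx⟩ := hbij.2 ⟨i, hik⟩
        refine ⟨x, x.2, ?_⟩
        have := hι x
        rw [hx] at this
        exact this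
      -- the set of elements of `C i` lying in some `k`-antichain of `s'`
      set M : ℕ → Finset α := fun i => (C i).filter
        (fun x => ∃ t, (t ⊆ s' ∧ (∀ x ∈ t, ∀ y ∈ t, x ≠ y → ¬ r x y) ∧ t.card = k) ∧ x ∈ t)
        with hMdef
      have hMne : ∀ i < k, (M i).Nonempty := by
        intro i hik
        obtain ⟨t0, ht0s, ht0ac, ht0c⟩ := hB
        obtain ⟨x, hxt, hxC⟩ := claim1 t0 ht0s ht0ac ht0c i hik
        exact ⟨x, Finset.mem_filter.2 ⟨hxC, t0, ⟨ht0s, ht0ac, ht0c⟩, hxt⟩⟩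
      have hMmax : ∀ i, ∃ m, i < k → m ∈ M i ∧ ∀ x ∈ M i, r x m := by
        intro i
        by_cases hik : i < k
        · obtain ⟨m, hm, hmax⟩ := chain_exists_max r hrefl @htrans (M i) (hMne i hik)
            (fun x hx y hy => hCch i x (Finset.mem_filter.1 hx).1 y (Finset.mem_filter.1 hy).1)
          exact ⟨m, fun _ => ⟨hm, hmax⟩⟩
        · exact ⟨a, fun hh => absurd hh hik⟩
      choose f hf using hMmax
      have hfC : ∀ i < k, f i ∈ C i := fun i hik => (Finset.mem_filter.1 ((hf i hik).1)).1
      have hfs' : ∀ i < k, f i ∈ s' := fun i hik => hCs i (hfC i hik)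
      -- maximal antichain elements of distinct chains are incomparable
      have hkey : ∀ i < k, ∀ j < k, i ≠ j → ¬ r (f i) (f j) := by
        intro i hik j hjk hij hrij
        obtain ⟨tj, hACtj, hfjtj⟩ := (Finset.mem_filter.1 ((hf j hjk).1)).2
        obtain ⟨x, hxt, hxCi⟩ := claim1 tj hACtj.1 hACtj.2.1 hACtj.2.2 i hik
        have hxM : x ∈ M i := Finset.mem_filter.2 ⟨hxCi, tj, hACtj, hxt⟩
        have hxf : r x (f i) := (hf i hik).2 x hxM
        have hxfj : r x (f j) := htrans hxf hrij
        have hxne : x ≠ f j := by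
          intro hh
          exact Finset.disjoint_left.1 (hCd i j hij) hxCi (hh ▸ hfC j hjk)
        exact hACtj.2.1 x hxt (f j) hfjtj hxne hxfj
      by_cases hcase : ∃ i, i < k ∧ r (f i) a
      · -- Case B1 : some `f i₀ ≤ a`; peel off the chain through `f i₀` and `a`
        obtain ⟨i0, hi0k, hfi0a⟩ := hcase
        set K : Finset α := insert a ((C i0).filter (fun x => r x (f i0))) with hKdef
        have haK : a ∈ K := Finset.mem_insert_self _ _
        have hKs : K ⊆ s := by
          apply Finset.insert_subset has
          exact (Finset.filter_subset _ _).trans ((hCs i0).trans hs'sub)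
        have hKchain : ∀ x ∈ K, ∀ y ∈ K, r x y ∨ r y x := by
          intro x hx y hy
          rcases Finset.mem_insert.1 hx with rfl | hx' <;>
            rcases Finset.mem_insert.1 hy with hy0 | hy'
          · subst hy0; exact Or.inl (hrefl _)
          · exact Or.inr (htrans (Finset.mem_filter.1 hy').2 hfi0a)
          · subst hy0; exact Or.inl (htrans (Finset.mem_filter.1 hx').2 hfi0a)
          · exact hCch i0 x (Finset.mem_filter.1 hx').1 y (Finset.mem_filter.1 hy').1
        have hsK : (s \ K).card ≤ N := by
          have hsub : s \ K ⊆ s' := by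
            intro x hx
            rcases Finset.mem_sdiff.1 hx with ⟨hxs, hxK⟩
            exact Finset.mem_erase.2 ⟨fun hh => hxK (hh ▸ haK), hxs⟩
          exact (Finset.card_le_card hsub).trans hs'card
        have hwK : ∀ t ⊆ s \ K, (∀ x ∈ t, ∀ y ∈ t, x ≠ y → ¬ r x y) → t.card ≤ k - 1 := by
          intro t ht hac
          have hts' : t ⊆ s' := by
            intro x hx
            rcases Finset.mem_sdiff.1 (ht hx) with ⟨hxs, hxK⟩
            exact Finset.mem_erase.2 ⟨fun hh => hxK (hh ▸ haK), hxs⟩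
          have h1 : t.card ≤ k := hw t (hts'.trans hs'sub) hac
          by_contra hgt
          have h2 : t.card = k := by omega
          obtain ⟨z, hzt, hzCi0⟩ := claim1 t hts' hac h2 i0 hi0k
          have hzM : z ∈ M i0 := Finset.mem_filter.2 ⟨hzCi0, t, ⟨hts', hac, h2⟩, hzt⟩
          have hzf : r z (f i0) := (hf i0 hi0k).2 z hzM
          have hzK : z ∈ K := Finset.mem_insert_of_mem (Finset.mem_filter.2 ⟨hzCi0, hzf⟩)
          exact (Finset.mem_sdiff.1 (ht hzt)).2 hzK
        obtain ⟨C2, hC2s, hC2ch, hC2d, hC2cov⟩ := IH (s \ K) hsK (k - 1) hwK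
        refine ⟨fun i => if i = 0 then K else C2 (i - 1), ?_, ?_, ?_, ?_⟩
        · intro i
          dsimp only
          by_cases hi : i = 0
          · rw [if_pos hi]; exact hKs
          · rw [if_neg hi]; exact (hC2s (i - 1)).trans Finset.sdiff_subset
        · intro i x hx y hy
          dsimp only at hx hy
          by_cases hi : i = 0
          · rw [if_pos hi] at hx hy; exact hKchain x hx y hy
          · rw [if_neg hi] at hx hy; exact hC2ch (i - 1) x hx y hy
        · intro i j hij
          dsimp only
          by_cases hi : i = 0 <;> by_cases hj : j = 0
          · exact absurd (hi.trans hj.symm) hij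
          · rw [if_pos hi, if_neg hj]
            rw [Finset.disjoint_left]
            intro x hxK hx2
            exact (Finset.mem_sdiff.1 (hC2s _ hx2)).2 hxK
          · rw [if_neg hi, if_pos hj]
            rw [Finset.disjoint_left]
            intro x hx2 hxK
            exact (Finset.mem_sdiff.1 (hC2s _ hx2)).2 hxK
          · rw [if_neg hi, if_neg hj]
            exact hC2d _ _ (by omega)
        · intro x hxs
          by_cases hxK : x ∈ K
          · exact ⟨0, by omega, by simpa using hxK⟩
          · obtain ⟨i, hik, hxi⟩ := hC2cov x (Finset.mem_sdiff.2 ⟨hxs, hxK⟩)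
            exact ⟨i + 1, by omega, by simpa using hxi⟩
      · -- Case B2 : impossible, there would be an antichain of size `k + 1`
        exfalso
        push_neg at hcase
        set T : Finset α := insert a ((Finset.range k).image f) with hTdef
        have hTs : T ⊆ s := by
          apply Finset.insert_subset has
          intro x hx
          obtain ⟨i, hi, rfl⟩ := Finset.mem_image.1 hx
          exact hs'sub (hfs' i (Finset.mem_range.1 hi))
        have hfne : ∀ i < k, f i ≠ a := fun i hik hh => hans' (hh ▸ hfs' i hik)
        have haim : a ∉ (Finset.range k).image f := by
          intro ha
          obtain ⟨i, hi, hfi⟩ := Finset.mem_image.1 ha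
          exact hfne i (Finset.mem_range.1 hi) hfi
        have hinj : ∀ i ∈ Finset.range k, ∀ j ∈ Finset.range k, f i = f j → i = j := by
          intro i hi j hj hfij
          by_contra hij
          exact Finset.disjoint_left.1 (hCd i j hij) (hfC i (Finset.mem_range.1 hi))
            (hfij ▸ hfC j (Finset.mem_range.1 hj))
        have hTcard : T.card = k + 1 := by
          rw [hTdef, Finset.card_insert_of_notMem haim,
            Finset.card_image_of_injOn hinj, Finset.card_range]
        have hTac : ∀ x ∈ T, ∀ y ∈ T, x ≠ y → ¬ r x y := by
          intro x hx y hy hxy hrxy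
          rcases Finset.mem_insert.1 hx with rfl | hx' <;>
            rcases Finset.mem_insert.1 hy with hy0 | hy'
          · exact hxy hy0.symm
          · obtain ⟨j, hj, rfl⟩ := Finset.mem_image.1 hy'
            exact hxy (hamax (f j) (hs'sub (hfs' j (Finset.mem_range.1 hj))) hrxy).symm
          · subst hy0
            obtain ⟨i, hi, rfl⟩ := Finset.mem_image.1 hx'
            exact hcase i (Finset.mem_range.1 hi) hrxy
          · obtain ⟨i, hi, rfl⟩ := Finset.mem_image.1 hx'
            obtain ⟨j, hj, rfl⟩ := Finset.mem_image.1 hy'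
            have hij : i ≠ j := fun hh => hxy (hh ▸ rfl)
            exact hkey i (Finset.mem_range.1 hi) j (Finset.mem_range.1 hj) hij hrxy
        have := hw T hTs hTac
        omega
    · -- Case A : every antichain of `s'` has at most `k - 1` elements
      have hw' : ∀ t ⊆ s', (∀ x ∈ t, ∀ y ∈ t, x ≠ y → ¬ r x y) → t.card ≤ k - 1 := by
        intro t ht hac
        have h1 : t.card ≤ k := hw t (ht.trans hs'sub) hac
        have h2 : t.card ≠ k := fun hc => hB ⟨t, ht, hac, hc⟩
        omega
      obtain ⟨C, hCs, hCch, hCd, hCcov⟩ := IH s' hs'card (k - 1) hw'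
      refine ⟨fun i => if i = 0 then {a} else C (i - 1), ?_, ?_, ?_, ?_⟩
      · intro i
        dsimp only
        by_cases hi : i = 0
        · rw [if_pos hi]; simpa using has
        · rw [if_neg hi]; exact (hCs (i - 1)).trans hs'sub
      · intro i x hx y hy
        dsimp only at hx hy
        by_cases hi : i = 0
        · rw [if_pos hi] at hx hy
          simp only [Finset.mem_singleton] at hx hy
          subst hx; subst hy; exact Or.inl (hrefl _)
        · rw [if_neg hi] at hx hy; exact hCch (i - 1) x hx y hy
      · intro i j hij
        dsimp only
        by_cases hi : i = 0 <;> by_cases hj : j = 0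
        · exact absurd (hi.trans hj.symm) hij
        · rw [if_pos hi, if_neg hj]
          rw [Finset.disjoint_left]
          intro x hx hx2
          simp only [Finset.mem_singleton] at hx
          subst hx
          exact hans' (hCs _ hx2)
        · rw [if_neg hi, if_pos hj]
          rw [Finset.disjoint_left]
          intro x hx2 hx
          simp only [Finset.mem_singleton] at hx
          subst hx
          exact hans' (hCs _ hx2)
        · rw [if_neg hi, if_neg hj]
          exact hCd _ _ (by omega)
      · intro x hxs
        by_cases hxa : x = a
        · exact ⟨0, by omega, by simp [hxa]⟩
        · obtain ⟨i, hik, hxi⟩ := hCcov x (Finset.mem_erase.2 ⟨hxa, hxs⟩)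
          exact ⟨i + 1, by omega, by simpa using hxi⟩

end DilworthAux

/-- The family of arcs `A i` — the initial portion of curve `C i` from the `y`-axis
up to its first intersection with a fixed curve `C a` — has an intersection graph
that is an incomparability graph; in particular it is perfect, so if it has no
clique of size `k + 1` it can be properly colored with `k` colors, i.e. partitioned
into `k` families of pairwise disjoint arcs.  Model: the fixed curve is the graph of
a continuous `h : [0, X] → ℝ`; arc `i` is the graph of a continuous
`g i : [0, e i] → ℝ` which stays strictly above `h` before its right endpoint and
ends on `C a` (`g i (e i) = h (e i)`). -/
theorem stmt16 (n k : ℕ) (X : ℝ) (hX : 0 ≤ X)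
    (h : ℝ → ℝ) (hhcont : ContinuousOn h (Set.Icc 0 X))
    (e : Fin n → ℝ) (he0 : ∀ i, 0 ≤ e i) (heX : ∀ i, e i ≤ X)
    (g : Fin n → ℝ → ℝ)
    (hgcont : ∀ i, ContinuousOn (g i) (Set.Icc 0 (e i)))
    (hend : ∀ i, g i (e i) = h (e i))
    (habove : ∀ i, ∀ u, 0 ≤ u → u < e i → h u < g i u)
    (hstart : ∀ i j : Fin n, i ≠ j → g i 0 ≠ g j 0)
    (G : SimpleGraph (Fin n))
    (hG : ∀ i j, G.Adj i j ↔ i ≠ j ∧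
      ∃ u, 0 ≤ u ∧ u ≤ min (e i) (e j) ∧ g i u = g j u) :
    (∃ le : Fin n → Fin n → Prop, IsPartialOrder (Fin n) le ∧
      ∀ i j, G.Adj i j ↔ i ≠ j ∧ ¬ le i j ∧ ¬ le j i) ∧
    (G.CliqueFree (k + 1) → G.Colorable k) := by
  classical
  -- `D i j` : the arcs `i` and `j` intersect
  set D : Fin n → Fin n → Prop :=
    fun i j => ∃ u, 0 ≤ u ∧ u ≤ min (e i) (e j) ∧ g i u = g j u with hDdef
  have hDsymm : ∀ i j, D i j → D j i := by
    rintro i j ⟨u, hu0, hum, heq⟩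
    exact ⟨u, hu0, by rwa [min_comm], heq.symm⟩
  -- key geometric lemma: disjoint arcs with ordered starting points stay ordered,
  -- and the lower arc ends first
  have key : ∀ i j, ¬ D i j → g i 0 < g j 0 →
      (∀ u, 0 ≤ u → u ≤ min (e i) (e j) → g i u < g j u) ∧ e i ≤ e j := by
    intro i j hnd h0
    have hlt : ∀ u, 0 ≤ u → u ≤ min (e i) (e j) → g i u < g j u := by
      intro u hu0 hum
      by_contra hge
      push_neg at hge
      have hne : g i u ≠ g j u := fun hh => hnd ⟨u, hu0, hum, hh⟩
      have hgt : g j u < g i u := lt_of_le_of_ne hge (fun hh => hne hh.symm)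
      have hsubi : Set.Icc (0 : ℝ) u ⊆ Set.Icc 0 (e i) :=
        Set.Icc_subset_Icc le_rfl (hum.trans (min_le_left _ _))
      have hsubj : Set.Icc (0 : ℝ) u ⊆ Set.Icc 0 (e j) :=
        Set.Icc_subset_Icc le_rfl (hum.trans (min_le_right _ _))
      have hcont : ContinuousOn (fun v => g i v - g j v) (Set.Icc 0 u) :=
        ((hgcont i).mono hsubi).sub ((hgcont j).mono hsubj)
      have hmem : (0 : ℝ) ∈ Set.Icc (g i 0 - g j 0) (g i u - g j u) :=
        Set.mem_Icc.2 ⟨by linarith, by linarith⟩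
      obtain ⟨c, hc, hceq⟩ := intermediate_value_Icc hu0 hcont hmem
      exact hnd ⟨c, hc.1, hc.2.trans hum, by linarith [sub_eq_zero.1 hceq]⟩
    refine ⟨hlt, ?_⟩
    by_contra hlt'
    push_neg at hlt'
    have hm : min (e i) (e j) = e j := min_eq_right (le_of_lt hlt')
    have h1 : g i (e j) < g j (e j) := hlt (e j) (he0 j) (by rw [hm])
    have h2 : h (e j) < g i (e j) := habove i (e j) (he0 j) hlt'
    rw [hend j] at h1
    linarith
  -- the partial order
  set le : Fin n → Fin n → Prop :=
    fun i j => i = j ∨ (¬ D i j ∧ g i 0 < g j 0) with hledef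
  have hle_refl : ∀ i, le i i := fun i => Or.inl rfl
  have hle_trans : ∀ {i j l}, le i j → le j l → le i l := by
    rintro i j l (rfl | ⟨hdij, h0ij⟩) hjl
    · exact hjl
    rcases hjl with rfl | ⟨hdjl, h0jl⟩
    · exact Or.inr ⟨hdij, h0ij⟩
    obtain ⟨hij, heij⟩ := key i j hdij h0ij
    obtain ⟨hjl', hejl⟩ := key j l hdjl h0jl
    refine Or.inr ⟨?_, h0ij.trans h0jl⟩
    rintro ⟨u, hu0, hum, hequ⟩
    have huei : u ≤ e i := hum.trans (min_le_left _ _)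
    have h1 : g i u < g j u := hij u hu0 (le_min huei (huei.trans heij))
    have h2 : g j u < g l u :=
      hjl' u hu0 (le_min (huei.trans heij) ((huei.trans heij).trans hejl))
    linarith
  have hle_anti : ∀ {i j}, le i j → le j i → i = j := by
    rintro i j (rfl | ⟨_, h0ij⟩) hji
    · rfl
    rcases hji with rfl | ⟨_, h0ji⟩
    · rfl
    · exact absurd (h0ij.trans h0ji) (lt_irrefl _)
  -- adjacency is incomparability
  have hadj : ∀ i j, G.Adj i j ↔ i ≠ j ∧ ¬ le i j ∧ ¬ le j i := by
    intro i j
    rw [hG]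
    constructor
    · rintro ⟨hne, hD⟩
      refine ⟨hne, ?_, ?_⟩
      · rintro (rfl | ⟨hnd, _⟩)
        · exact hne rfl
        · exact hnd hD
      · rintro (rfl | ⟨hnd, _⟩)
        · exact hne rfl
        · exact hnd (hDsymm i j hD)
    · rintro ⟨hne, hn1, hn2⟩
      refine ⟨hne, ?_⟩
      by_contra hnd
      rcases lt_or_gt_of_ne (hstart i j hne) with hlt | hgt
      · exact hn1 (Or.inr ⟨hnd, hlt⟩)
      · exact hn2 (Or.inr ⟨fun hd => hnd (hDsymm j i hd), hgt⟩)
  constructor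
  · have hpo : IsPartialOrder (Fin n) le :=
      { refl := hle_refl
        trans := fun _ _ _ => hle_trans
        antisymm := fun _ _ => hle_anti }
    exact ⟨le, hpo, hadj⟩
  · intro hcf
    -- antichains are cliques, hence of size at most `k`
    have hw : ∀ t ⊆ (Finset.univ : Finset (Fin n)),
        (∀ x ∈ t, ∀ y ∈ t, x ≠ y → ¬ le x y) → t.card ≤ k := by
      intro t _ hac
      by_contra hgt
      push_neg at hgt
      obtain ⟨u, hut, huc⟩ := Finset.exists_subset_card_eq (Nat.succ_le_of_lt hgt)
      have hclique : G.IsNClique (k + 1) u := by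
        constructor
        · intro x hx y hy hxy
          exact (hadj x y).2 ⟨hxy, hac x (hut hx) y (hut hy) hxy,
            hac y (hut hy) x (hut hx) hxy.symm⟩
        · exact huc
      exact hclique.not_cliqueFree hcf
    obtain ⟨C, hCs, hCch, hCd, hCcov⟩ :=
      dilworth_cover le hle_refl (fun {_ _ _} => hle_trans) (fun {_ _} => hle_anti)
        (Finset.univ : Finset (Fin n)).card Finset.univ le_rfl k hw
    have hc : ∀ x : Fin n, ∃ i : Fin k, x ∈ C i := by
      intro x
      obtain ⟨i, hik, hxi⟩ := hCcov x (Finset.mem_univ x)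
      exact ⟨⟨i, hik⟩, hxi⟩
    choose col hcol using hc
    refine ⟨SimpleGraph.Coloring.mk col ?_⟩
    intro v w hvw heq
    have hv := hcol v
    have hw' := hcol w
    rw [heq] at hv
    have hcomp := hCch (col w) v hv w hw'
    obtain ⟨hne, hn1, hn2⟩ := (hadj v w).1 hvw
    rcases hcomp with h1 | h1
    · exact hn1 h1
    · exact hn2 h1
end

section
/- Let F = {C_1, ..., C_n} be a family of x-monotone right-flag curves, modeled as continuous functions on [0, x_i] with distinct values at 0, ordered by value at 0. If C_i and C_j cross with i < j, and i < l < j, then curve C_l either crosses C_i or C_j, or satisfies x_l ≤ min(x_i, x_j). -/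
/-- Trichotomy (the `m = 2` case of Lemma `short`): if right-flag curves `C i` and
`C j` cross with `i < j`, then any curve `C l` with `i < l < j` either crosses `C i`,
or crosses `C j`, or has its right endpoint at `x`-coordinate at most
`min (x i) (x j)`. -/
theorem stmt18 (n : ℕ) (x : Fin n → ℝ) (f : Fin n → ℝ → ℝ)
    (hx : ∀ i, 0 ≤ x i)
    (hcont : ∀ i, ContinuousOn (f i) (Set.Icc 0 (x i)))
    (horder : ∀ i j : Fin n, i < j → f i 0 < f j 0)
    (i j l : Fin n) (hij : i < j) (hil : i < l) (hlj : l < j)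
    (hcross : ∃ t, 0 ≤ t ∧ t ≤ min (x i) (x j) ∧ f i t = f j t) :
    (∃ t, 0 ≤ t ∧ t ≤ min (x l) (x i) ∧ f l t = f i t) ∨
    (∃ t, 0 ≤ t ∧ t ≤ min (x l) (x j) ∧ f l t = f j t) ∨
    x l ≤ min (x i) (x j) := by
  by_cases hshort : x l ≤ min (x i) (x j)
  · exact Or.inr (Or.inr hshort)
  obtain ⟨t0, ht00, ht0m, hfij⟩ := hcross
  push_neg at hshort
  have ht0l : t0 ≤ x l := ht0m.trans hshort.le
  have ht0i : t0 ≤ x i := ht0m.trans (min_le_left _ _)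
  have ht0j : t0 ≤ x j := ht0m.trans (min_le_right _ _)
  have hsubl : Set.Icc (0:ℝ) t0 ⊆ Set.Icc 0 (x l) := Set.Icc_subset_Icc le_rfl ht0l
  have hsubi : Set.Icc (0:ℝ) t0 ⊆ Set.Icc 0 (x i) := Set.Icc_subset_Icc le_rfl ht0i
  have hsubj : Set.Icc (0:ℝ) t0 ⊆ Set.Icc 0 (x j) := Set.Icc_subset_Icc le_rfl ht0j
  by_cases hA : f l t0 ≤ f i t0
  · -- f l starts above f i and ends below: crosses f i
    have cg : ContinuousOn (fun t => f l t - f i t) (Set.Icc 0 t0) :=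
      ((hcont l).mono hsubl).sub ((hcont i).mono hsubi)
    have h0 : (0:ℝ) ∈ Set.Icc (f l t0 - f i t0) (f l 0 - f i 0) :=
      ⟨by linarith, by linarith [horder i l hil]⟩
    obtain ⟨t, htmem, ht⟩ := intermediate_value_Icc' ht00 cg h0
    exact Or.inl ⟨t, htmem.1, le_min (htmem.2.trans ht0l) (htmem.2.trans ht0i),
      by dsimp at ht; linarith⟩
  by_cases hB : f j t0 ≤ f l t0
  · -- f l starts below f j and ends above: crosses f j
    have cg : ContinuousOn (fun t => f l t - f j t) (Set.Icc 0 t0) :=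
      ((hcont l).mono hsubl).sub ((hcont j).mono hsubj)
    have h0 : (0:ℝ) ∈ Set.Icc (f l 0 - f j 0) (f l t0 - f j t0) :=
      ⟨by linarith [horder l j hlj], by linarith⟩
    obtain ⟨t, htmem, ht⟩ := intermediate_value_Icc ht00 cg h0
    exact Or.inr (Or.inl ⟨t, htmem.1, le_min (htmem.2.trans ht0l) (htmem.2.trans ht0j),
      by dsimp at ht; linarith⟩)
  · push_neg at hA hB
    exact absurd hfij (by linarith)
end

section
/- Let G be an ordered graph on {1,...,n} and suppose H is an induced subgraph obtained as follows: partition {1,...,n} into consecutive intervals I_0, I_1, ..., I_m, properly color each G[I_j] with at most α colors, pick one global color class G' with χ(G') ≥ χ(G)/α, and let H be the part of G' lying in the even-indexed intervals (or odd-indexed, whichever has larger chromatic number). Then χ(H) ≥ χ(G)/(2α), and any edge uv of H with u < v has its endpoints in distinct even-indexed intervals, so there is a full interval I_{2i+1} strictly between u and v. -/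
/-- Structural core of the sequence lemma: let `G` be an ordered graph on `Fin n`
whose vertex set is split into consecutive intervals `[r i, r (i+1))` for
`i = 0, …, m - 1`, and let `c` be a coloring with at most `α` colors that is proper
on each interval.  Then there is a set `S` of vertices (a color class restricted to
alternate intervals) with `χ(G[S]) ≥ χ(G) / (2 α)`, such that between the endpoints
of any edge of `G[S]` there lies a full interval of the decomposition. -/
theorem stmt19 (n m α : ℕ) (hα : 0 < α) (hm : 0 < m) (G : SimpleGraph (Fin n))
    (r : ℕ → ℕ) (hr0 : r 0 = 0) (hrm : r m = n) (hmono : ∀ i < m, r i < r (i + 1))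
    (c : Fin n → Fin α)
    (hproper : ∀ i < m, ∀ u v : Fin n,
      r i ≤ (u : ℕ) → (u : ℕ) < r (i + 1) → r i ≤ (v : ℕ) → (v : ℕ) < r (i + 1) →
      G.Adj u v → c u ≠ c v) :
    ∃ S : Set (Fin n),
      G.chromaticNumber ≤ (2 * α : ℕ∞) * (G.induce S).chromaticNumber ∧
      ∀ u v : Fin n, u ∈ S → v ∈ S → G.Adj u v → u < v →
        ∃ j < m, (u : ℕ) < r j ∧ r (j + 1) ≤ (v : ℕ) := by
  classical
  -- monotonicity of r on [0, m]
  have rmono : ∀ j, j ≤ m → ∀ i, i ≤ j → r i ≤ r j := by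
    intro j hjm
    induction j with
    | zero =>
      intro i hi
      have h0 : i = 0 := Nat.le_zero.mp hi
      rw [h0]
    | succ k ih =>
      intro i hi
      by_cases h : i = k + 1
      · simp [h]
      · exact le_trans (ih (by omega) i (by omega)) (le_of_lt (hmono k (by omega)))
  -- interval index
  set idx : Fin n → ℕ := fun v => Nat.findGreatest (fun i => r i ≤ (v : ℕ)) (m - 1) with hidxdef
  have hidxle : ∀ v : Fin n, idx v ≤ m - 1 := fun v => Nat.findGreatest_le _
  have hidxm : ∀ v : Fin n, idx v < m := fun v => lt_of_le_of_lt (hidxle v) (by omega)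
  have hidx1 : ∀ v : Fin n, r (idx v) ≤ (v : ℕ) := by
    intro v
    exact Nat.findGreatest_spec (m := 0) (n := m - 1) (P := fun i => r i ≤ (v : ℕ))
      (Nat.zero_le _) (by show r 0 ≤ (v : ℕ); rw [hr0]; exact Nat.zero_le _)
  have hidx2 : ∀ v : Fin n, (v : ℕ) < r (idx v + 1) := by
    intro v
    by_cases h : idx v + 1 ≤ m - 1
    · have := Nat.findGreatest_is_greatest (Nat.lt_succ_self (idx v)) h
      simpa using Nat.lt_of_not_le this
    · have : idx v = m - 1 := by have := hidxle v; omega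
      have : idx v + 1 = m := by omega
      rw [this, hrm]
      exact v.isLt
  -- parity
  set pb : Fin n → Bool := fun v => decide (idx v % 2 = 0) with hpbdef
  have pbeq : ∀ u v : Fin n, pb u = pb v → idx u % 2 = idx v % 2 := by
    intro u v h
    simp only [hpbdef, decide_eq_decide] at h
    omega
  -- the color classes
  set S : Fin α × Bool → Set (Fin n) := fun q => {v | c v = q.1 ∧ pb v = q.2} with hSdef
  have hmemself : ∀ v : Fin n, v ∈ S (c v, pb v) := fun v => ⟨rfl, rfl⟩
  -- key structural fact: same class + adjacent forces interval jump
  have hjump : ∀ u v : Fin n, c u = c v → pb u = pb v → G.Adj u v → (u : ℕ) < (v : ℕ) →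
      ∃ j < m, (u : ℕ) < r j ∧ r (j + 1) ≤ (v : ℕ) := by
    intro u v hc hp hadj hlt
    have hne : idx u ≠ idx v := by
      intro heq
      exact hproper (idx u) (hidxm u) u v (hidx1 u) (hidx2 u) (heq ▸ hidx1 v)
        (heq ▸ hidx2 v) hadj hc
    have hltidx : idx u < idx v := by
      rcases lt_or_gt_of_ne hne with h | h
      · exact h
      · exfalso
        have h1 : r (idx v + 1) ≤ r (idx u) :=
          rmono (idx u) (le_of_lt (hidxm u)) (idx v + 1) (by omega)
        have := hidx2 v
        have := hidx1 u
        omega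
    have hpar := pbeq u v hp
    have h2 : idx u + 2 ≤ idx v := by omega
    refine ⟨idx u + 1, by have := hidxm v; omega, hidx2 u, ?_⟩
    have hra : r (idx u + 2) ≤ r (idx v) :=
      rmono (idx v) (le_of_lt (hidxm v)) (idx u + 2) h2
    have hrb : r (idx u + 1 + 1) = r (idx u + 2) := by congr 1
    have := hidx1 v
    omega
  -- choose the class with the largest chromatic number
  have : Nonempty (Fin α) := ⟨⟨0, hα⟩⟩
  obtain ⟨q₀, hq₀⟩ := Finite.exists_max (fun q => (G.induce (S q)).chromaticNumber)
  refine ⟨S q₀, ?_, ?_⟩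
  · -- chromatic bound
    rcases eq_or_ne (G.induce (S q₀)).chromaticNumber ⊤ with htop | hfin
    · have hne : (2 * α : ℕ∞) ≠ 0 := by
        simp [hα.ne']
      rw [htop, ENat.mul_top hne]
      exact le_top
    · obtain ⟨N, hN⟩ : ∃ N : ℕ, ((N : ℕ∞)) = (G.induce (S q₀)).chromaticNumber := by
        lift (G.induce (S q₀)).chromaticNumber to ℕ using hfin with N hN
        exact ⟨N, rfl⟩
      have hcol : ∀ q, (G.induce (S q)).Colorable N := by
        intro q
        rw [← SimpleGraph.chromaticNumber_le_iff_colorable]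
        exact le_trans (hq₀ q) hN.ge
      have D : ∀ q, (G.induce (S q)).Coloring (Fin N) := fun q => (hcol q).some
      have Dcongr : ∀ (q q' : Fin α × Bool) (h : q = q') (w : Fin n) (hw : w ∈ S q)
          (hw' : w ∈ S q'), D q ⟨w, hw⟩ = D q' ⟨w, hw'⟩ := by
        intro q q' h w hw hw'; subst h; rfl
      have C : G.Coloring (Fin α × Bool × Fin N) := by
        refine SimpleGraph.Coloring.mk
          (fun v => (c v, pb v, D (c v, pb v) ⟨v, hmemself v⟩)) ?_
        intro u v hadj hFeq
        simp only [Prod.ext_iff] at hFeq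
        obtain ⟨h1, h2, h3⟩ := hFeq
        have hv' : v ∈ S (c u, pb u) := ⟨h1.symm, h2.symm⟩
        have heq2 : D (c v, pb v) ⟨v, hmemself v⟩ = D (c u, pb u) ⟨v, hv'⟩ :=
          Dcongr _ _ (by rw [h1, h2]) v _ _
        have hvalid := (D (c u, pb u)).valid
          (show (G.induce (S (c u, pb u))).Adj ⟨u, hmemself u⟩ ⟨v, hv'⟩ from hadj)
        exact hvalid (h3.trans heq2)
      have hcolG : G.Colorable (Fintype.card (Fin α × Bool × Fin N)) := C.colorable
      have hle := hcolG.chromaticNumber_le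
      calc G.chromaticNumber ≤ (Fintype.card (Fin α × Bool × Fin N) : ℕ∞) := hle
        _ = (2 * α : ℕ∞) * (G.induce (S q₀)).chromaticNumber := by
            rw [← hN, Fintype.card_prod, Fintype.card_prod, Fintype.card_fin,
              Fintype.card_fin, Fintype.card_bool]
            exact_mod_cast (show α * (2 * N) = 2 * α * N by ring)
  · -- edge structure
    intro u v hu hv hadj hlt
    have hc : c u = c v := hu.1.trans hv.1.symm
    have hp : pb u = pb v := hu.2.trans hv.2.symm
    exact hjump u v hc hp hadj hlt
end
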